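/- arXiv:1810.11389 — 4 statements merged into one kernel-verified Lean document; each statement's English description precedes it below -/
import Mathlib

section
/- Let 𝕂_d be the set of convex domains Ω ⊂ ℂ^d containing no complex affine line such that, for every i = 1, …, d, Z_i ∩ Ω = ∅ and ie_1 + 𝔻_1·e_i ⊂ Ω. Then 𝕂_d is compact: every sequence of domains in 𝕂_d has a subsequence converging in the local Hausdorff topology to a domain belonging to 𝕂_d. -/
open Set Metric Filter Topology
open scoped ENNReal NNReal

noncomputable section

section Defs

variable {E F : Type*} [NormedAddCommGroup E] [NormedSpace ℂ E]
  [NormedAddCommGroup F] [NormedSpace ℂ F]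

/-- A convex domain: a non-empty open convex subset. -/
def IsConvexDomain (Ω : Set E) : Prop := IsOpen Ω ∧ Convex ℝ Ω ∧ Ω.Nonempty

/-- `Ω` contains no complex affine line `a + ℂ·b`, `b ≠ 0`. -/
def NoComplexLine (Ω : Set E) : Prop :=
  ∀ a b : E, b ≠ 0 → ¬ (∀ lam : ℂ, a + lam • b ∈ Ω)

/-- Membership in `𝕏_d`: a convex domain containing no complex affine line. -/
def InX (Ω : Set E) : Prop := IsConvexDomain Ω ∧ NoComplexLine Ω

/-- Convergence of a sequence of sets in the local Hausdorff topology. -/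
def LocHausConv (Ωn : ℕ → Set E) (Ω : Set E) : Prop :=
  ∃ R₀ : ℝ, 0 < R₀ ∧ ∀ R : ℝ, R₀ ≤ R →
    Tendsto (fun n => Metric.hausdorffDist (Ωn n ∩ Metric.ball 0 R) (Ω ∩ Metric.ball 0 R))
      atTop (nhds 0)

/-- The sequence `z` is compactly divergent in `Ω`. -/
def CompactlyDivergent (Ω : Set E) (z : ℕ → E) : Prop :=
  ∀ K : Set E, IsCompact K → K ⊆ Ω → ∃ N : ℕ, ∀ n ≥ N, z n ∉ K

/-- `Ω'` is an affine limit of `Ω`. -/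
def IsAffineLimit (Ω Ω' : Set E) : Prop :=
  InX Ω' ∧
  ∃ (z : ℕ → E) (zlim : E) (A : ℕ → (E ≃ᵃ[ℂ] E)),
    (∀ n, z n ∈ Ω) ∧ CompactlyDivergent Ω z ∧ zlim ∈ Ω' ∧
    LocHausConv (fun n => (A n) '' Ω) Ω' ∧
    Tendsto (fun n => A n (z n)) atTop (nhds zlim)

/-- `S ⊆ E` and `T ⊆ F` are biholomorphic. -/
def Biholomorphic (S : Set E) (T : Set F) : Prop :=
  ∃ (f : E → F) (g : F → E),
    DifferentiableOn ℂ f S ∧ DifferentiableOn ℂ g T ∧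
    MapsTo f S T ∧ MapsTo g T S ∧ InvOn g f S T

/-- The bidisk `𝔻 × 𝔻 ⊆ ℂ × ℂ`. -/
def unitBidisk : Set (ℂ × ℂ) := (Metric.ball (0:ℂ) 1) ×ˢ (Metric.ball (0:ℂ) 1)

/-- The infinitesimal Kobayashi metric of `Ω ⊆ E`. -/
def kob (Ω : Set E) (z v : E) : ℝ :=
  sInf { c : ℝ | ∃ (ξ : ℂ) (f : ℂ → E),
    DifferentiableOn ℂ f (Metric.ball 0 1) ∧ MapsTo f (Metric.ball 0 1) Ω ∧
    f 0 = z ∧ ξ • deriv f 0 = v ∧ c = ‖ξ‖ }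

/-- `δ_Ω(z; v)`: the distance from `z` to `(z + ℂ·v) ∩ ∂Ω`, valued in `ℝ≥0∞`
(`⊤` when the intersection is empty). -/
def distInDir (Ω : Set E) (z v : E) : ℝ≥0∞ :=
  EMetric.infEdist z ({x | ∃ lam : ℂ, x = z + lam • v} ∩ frontier Ω)

end Defs


/-- The square `𝔻₁ = {z : |Re z| + |Im z| < 1}`. -/
def D1set : Set ℂ := {z : ℂ | |z.re| + |z.im| < 1}

/-- The planes `Z_1, …, Z_d` (indexed here by `Fin d`): `Z_1 = span{e_2, …, e_d}` and,
for `2 ≤ j ≤ d`, `Z_j = i e_1 + e_j + span{e_{j+1}, …, e_d}`. -/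
def Zset (d : ℕ) [NeZero d] (m : Fin d) : Set (EuclideanSpace ℂ (Fin d)) :=
  if m = 0 then {z | z 0 = 0}
  else {z | z 0 = Complex.I ∧ z m = 1 ∧ ∀ k : Fin d, 0 < k → k < m → z k = 0}

/-- The family `𝕂_d`: convex domains `Ω ∈ 𝕏_d` with `Z_i ∩ Ω = ∅` and
`i e_1 + 𝔻₁·e_i ⊆ Ω` for all `i = 1, …, d`. -/
def Kd (d : ℕ) [NeZero d] : Set (Set (EuclideanSpace ℂ (Fin d))) :=
  {Ω | InX Ω ∧ ∀ m : Fin d,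
    Zset d m ∩ Ω = ∅ ∧
    ∀ w ∈ D1set,
      Complex.I • EuclideanSpace.single (0 : Fin d) (1:ℂ) +
        w • EuclideanSpace.single m (1:ℂ) ∈ Ω}

/-! Each `Ω_n` contains the ball of radius `1/(2d)` around `p = i e_1` (the convex hull of the
squares `p + 𝔻₁ e_m`), so the gauges of `Ω_n - p` are uniformly Lipschitz, and by Arzelà–Ascoli a
subsequence converges locally uniformly to a convex, positively homogeneous `g`. The limit domain is
`p + {g < 1}`: shrinking towards `p` by a factor `1 - ε` moves points of `B(0, R)` by at most
`2Rε`, which turns uniform closeness of gauges into Hausdorff closeness. The conditions defining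
`𝕂_d` pass to the limit: points of the limit lie in `Ω_n` for large `n`, the squares are open so
slightly enlarged squares still lie in every `Ω_n`, and an open convex set containing a complex line
contains the parallel line through `p`, which meets one of the `Z_m`. -/

section

variable {E : Type*} [NormedAddCommGroup E] [NormedSpace ℝ E]

lemma exists_mem_sublevel_inter_ball_dist_le {g h : E → ℝ} {p x : E} {R ε : ℝ}
    (hh : ∀ t : ℝ, 0 ≤ t → ∀ y, h (t • y) = t * h y) (hp : ‖p‖ < R) (hε : 0 < ε) (hε1 : ε ≤ 1)
    (hgh : ∀ y ∈ ball (0 : E) (2 * R), |g y - h y| ≤ ε)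
    (hx : x ∈ {x | g (x - p) < 1} ∩ ball 0 R) :
    ∃ y ∈ {y | h (y - p) < 1} ∩ ball 0 R, dist x y ≤ 2 * R * ε := by
  obtain ⟨hxg, hxR⟩ := hx
  rw [mem_ofPred_eq] at hxg
  rw [mem_ball_zero_iff] at hxR
  have hxp : ‖x - p‖ < 2 * R := (norm_sub_le x p).trans_lt (by linarith)
  have hhx : h (x - p) ≤ g (x - p) + ε := by
    linarith [(abs_le.1 (hgh (x - p) (mem_ball_zero_iff.2 hxp))).1]
  -- shrink `x` towards `p` by the factor `1 - ε`
  refine ⟨p + (1 - ε) • (x - p), ⟨?_, ?_⟩, ?_⟩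
  · rw [mem_ofPred_eq, add_sub_cancel_left, hh _ (by linarith)]
    nlinarith
  · rw [mem_ball_zero_iff, show p + (1 - ε) • (x - p) = (1 - ε) • x + ε • p by module]
    calc ‖(1 - ε) • x + ε • p‖ ≤ (1 - ε) * ‖x‖ + ε * ‖p‖ := by
          refine (norm_add_le _ _).trans_eq ?_
          rw [norm_smul_of_nonneg (by linarith), norm_smul_of_nonneg hε.le]
      _ < R := by nlinarith
  · rw [dist_eq_norm, show x - (p + (1 - ε) • (x - p)) = ε • (x - p) by module,
      norm_smul_of_nonneg hε.le]
    nlinarith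

lemma hausdorffDist_sublevel_inter_ball_le {g h : E → ℝ} {p : E} {R ε : ℝ}
    (hg : ∀ t : ℝ, 0 ≤ t → ∀ y, g (t • y) = t * g y)
    (hh : ∀ t : ℝ, 0 ≤ t → ∀ y, h (t • y) = t * h y) (hp : ‖p‖ < R) (hε : 0 < ε) (hε1 : ε ≤ 1)
    (hgh : ∀ y ∈ ball (0 : E) (2 * R), |g y - h y| ≤ ε) :
    hausdorffDist ({x | g (x - p) < 1} ∩ ball 0 R) ({x | h (x - p) < 1} ∩ ball 0 R)
      ≤ 2 * R * ε := by
  have hR : 0 < R := (norm_nonneg p).trans_lt hp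
  refine hausdorffDist_le_of_mem_dist (by positivity)
    (fun x hx => exists_mem_sublevel_inter_ball_dist_le hh hp hε hε1 hgh hx)
    (fun x hx => exists_mem_sublevel_inter_ball_dist_le hg hp hε hε1
      (fun y hy => abs_sub_comm (g y) (h y) ▸ hgh y hy) hx)

lemma tendsto_hausdorffDist_sublevel_inter_ball {ι : Type*} {l : Filter ι} {G : ι → E → ℝ}
    {g : E → ℝ} {p : E} {R : ℝ} (hG : ∀ i, ∀ t : ℝ, 0 ≤ t → ∀ y, G i (t • y) = t * G i y)
    (hg : ∀ t : ℝ, 0 ≤ t → ∀ y, g (t • y) = t * g y) (hp : ‖p‖ < R)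
    (hGg : TendstoUniformlyOn G g l (ball 0 (2 * R))) :
    Tendsto (fun i => hausdorffDist ({x | G i (x - p) < 1} ∩ ball 0 R)
      ({x | g (x - p) < 1} ∩ ball 0 R)) l (𝓝 0) := by
  have hR : 0 < R := (norm_nonneg p).trans_lt hp
  refine Metric.tendsto_nhds.2 fun ε hε => ?_
  set δ := min 1 (ε / (4 * R))
  have hδ : 0 < δ := lt_min one_pos (by positivity)
  filter_upwards [Metric.tendstoUniformlyOn_iff.1 hGg δ hδ] with i hi
  have hle := hausdorffDist_sublevel_inter_ball_le (hG i) hg hp hδ (min_le_left _ _)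
    fun y hy => by rw [← Real.dist_eq, dist_comm]; exact (hi y hy).le
  have hδε : 2 * R * δ ≤ ε / 2 := by
    calc 2 * R * δ ≤ 2 * R * (ε / (4 * R)) := by gcongr; exact min_le_right _ _
      _ = ε / 2 := by field_simp; ring
  rw [Real.dist_eq, sub_zero, abs_of_nonneg hausdorffDist_nonneg]
  linarith

theorem exists_subseq_tendstoLocallyUniformly_of_lipschitzWith {X : Type*} [PseudoMetricSpace X]
    [ProperSpace X] {f : ℕ → X → ℝ} {K : ℝ≥0} (hf : ∀ n, LipschitzWith K (f n)) (x₀ : X)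
    {C : ℝ} (hC : ∀ n, |f n x₀| ≤ C) :
    ∃ φ : ℕ → ℕ, StrictMono φ ∧ ∃ g : X → ℝ, LipschitzWith K g ∧
      TendstoLocallyUniformly (fun n => f (φ n)) g atTop := by
  set S : Set C(X, ℝ) := {u | LipschitzWith K u ∧ |u x₀| ≤ C}
  have hS_pi : ContinuousMap.toFun '' S = {u : X → ℝ | LipschitzWith K u ∧ |u x₀| ≤ C} := by
    ext u
    refine ⟨?_, fun hu => ⟨⟨u, hu.1.continuous⟩, hu, rfl⟩⟩
    rintro ⟨v, hv, rfl⟩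
    exact hv
  -- Tychonoff: the values at `x` stay in `[-(C + K d(x, x₀)), C + K d(x, x₀)]`
  have hS_pi_compact : IsCompact (ContinuousMap.toFun '' S) := by
    rw [hS_pi]
    refine (isCompact_univ_pi fun x => isCompact_closedBall (0 : ℝ) (C + K * dist x x₀))
      |>.of_isClosed_subset ((isClosed_setOfPred_lipschitzWith K).inter
        (isClosed_le (continuous_apply x₀).abs continuous_const)) ?_
    rintro u ⟨hu, hux₀⟩ x -
    rw [mem_closedBall_zero_iff, Real.norm_eq_abs]
    have hux := hu.dist_le_mul x x₀
    rw [Real.dist_eq] at hux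
    linarith [abs_sub_abs_le_abs_sub (u x) (u x₀)]
  have hS_compact : IsCompact S := ArzelaAscoli.isCompact_of_equicontinuous S hS_pi_compact
    (LipschitzWith.uniformEquicontinuous _ K fun u => u.2.1).equicontinuous
  obtain ⟨g, hg, φ, hφ, hfφ⟩ := hS_compact.tendsto_subseq
    (x := fun n => ⟨f n, (hf n).continuous⟩) fun n => ⟨hf n, hC n⟩
  exact ⟨φ, hφ, g, hg.1, ContinuousMap.tendsto_iff_tendstoLocallyUniformly.1 hfφ⟩

lemma convexOn_gauge {s : Set E} (hs : Convex ℝ s) (hs₀ : Absorbent ℝ s) :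
    ConvexOn ℝ univ (gauge s) := by
  refine ⟨convex_univ, fun x _ y _ a b ha hb _ => ?_⟩
  calc gauge s (a • x + b • y) ≤ gauge s (a • x) + gauge s (b • y) := gauge_add_le hs hs₀ _ _
    _ = a • gauge s x + b • gauge s y := by
        rw [gauge_smul_of_nonneg ha, gauge_smul_of_nonneg hb]

lemma ConvexOn.of_tendsto {ι : Type*} {l : Filter ι} [l.NeBot] {s : Set E} {f : ι → E → ℝ}
    {g : E → ℝ} (hf : ∀ i, ConvexOn ℝ s (f i))
    (hfg : ∀ x ∈ s, Tendsto (fun i => f i x) l (𝓝 (g x))) : ConvexOn ℝ s g := by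
  obtain ⟨i⟩ := l.nonempty_of_neBot
  refine ⟨(hf i).1, fun x hx y hy a b ha hb hab => ?_⟩
  have hxy : a • x + b • y ∈ s := (hf i).1 hx hy ha hb hab
  exact le_of_tendsto_of_tendsto' (hfg _ hxy)
    (((hfg x hx).const_smul a).add ((hfg y hy).const_smul b))
    fun j => (hf j).2 hx hy ha hb hab

lemma mem_iff_gauge_preimage_add_lt_one {U : Set E} {p : E} (hUo : IsOpen U)
    (hUc : Convex ℝ U) (hp : p ∈ U) (x : E) :
    x ∈ U ↔ gauge ((p + ·) ⁻¹' U) (x - p) < 1 := by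
  rw [← mem_ofPred_eq (p := fun y => gauge ((p + ·) ⁻¹' U) y < 1),
    setOfPred_gauge_lt_one_eq_self_of_isOpen (hUc.translate_preimage_right p) (by simpa)
      (hUo.preimage (continuous_const_add p)), mem_preimage, add_sub_cancel]

theorem exists_subseq_tendstoLocallyUniformly_gauge [ProperSpace E] {s : ℕ → Set E} {r : ℝ}
    (hr : 0 < r) (hs : ∀ n, Convex ℝ (s n)) (hball : ∀ n, ball 0 r ⊆ s n) :
    ∃ φ : ℕ → ℕ, StrictMono φ ∧ ∃ g : E → ℝ, Continuous g ∧ ConvexOn ℝ univ g ∧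
      (∀ t : ℝ, 0 ≤ t → ∀ y, g (t • y) = t * g y) ∧
      TendstoLocallyUniformly (fun n => gauge (s (φ n))) g atTop := by
  lift r to ℝ≥0 using hr.le
  obtain ⟨φ, hφ, g, hg_lip, hsg⟩ := exists_subseq_tendstoLocallyUniformly_of_lipschitzWith
    (fun n => (hs n).lipschitzWith_gauge (NNReal.coe_pos.1 hr) (hball n)) 0 (C := 0)
    fun n => by simp
  have hsg_pt y : Tendsto (fun n => gauge (s (φ n)) y) atTop (𝓝 (g y)) :=
    hsg.tendstoLocallyUniformlyOn.tendsto_at (mem_univ y)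
  refine ⟨φ, hφ, g, hg_lip.continuous, ?_, fun t ht y => ?_, hsg⟩
  · exact ConvexOn.of_tendsto (fun n => convexOn_gauge (hs (φ n))
      (absorbent_nhds_zero (mem_of_superset (ball_mem_nhds 0 hr) (hball _)))) fun y _ => hsg_pt y
  · refine tendsto_nhds_unique (hsg_pt (t • y)) ?_
    simpa only [gauge_smul_of_nonneg ht, smul_eq_mul] using (hsg_pt y).const_mul t

theorem exists_subseq_tendsto_hausdorffDist_of_ball_subset [ProperSpace E] {U : ℕ → Set E}
    {p : E} {r : ℝ} (hr : 0 < r) (hUo : ∀ n, IsOpen (U n)) (hUc : ∀ n, Convex ℝ (U n))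
    (hball : ∀ n, ball p r ⊆ U n) :
    ∃ φ : ℕ → ℕ, StrictMono φ ∧ ∃ V : Set E, IsOpen V ∧ Convex ℝ V ∧
      (∀ x ∈ V, ∀ᶠ n in atTop, x ∈ U (φ n)) ∧
      (∀ x (t : ℝ), 1 < t → (∀ n, p + t • (x - p) ∈ U n) → x ∈ V) ∧
      ∀ R, ‖p‖ < R →
        Tendsto (fun n => hausdorffDist (U (φ n) ∩ ball 0 R) (V ∩ ball 0 R)) atTop (𝓝 0) := by
  set G : ℕ → E → ℝ := fun n => gauge ((p + ·) ⁻¹' U n)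
  have hmem n x : x ∈ U n ↔ G n (x - p) < 1 :=
    mem_iff_gauge_preimage_add_lt_one (hUo n) (hUc n) (hball n (mem_ball_self hr)) x
  have hG_hom n (t : ℝ) (ht : 0 ≤ t) y : G n (t • y) = t * G n y := gauge_smul_of_nonneg ht y
  obtain ⟨φ, hφ, g, hg_cont, hg_conv, hg_hom, hGg⟩ := exists_subseq_tendstoLocallyUniformly_gauge
    hr (fun n => (hUc n).translate_preimage_right p) fun n y hy =>
      hball n (by rwa [mem_ball, dist_self_add_left, ← dist_zero_right])
  have hGg_pt x : Tendsto (fun n => G (φ n) x) atTop (𝓝 (g x)) :=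
    hGg.tendstoLocallyUniformlyOn.tendsto_at (mem_univ x)
  refine ⟨φ, hφ, {x | g (x - p) < 1}, ?_, ?_, ?_, ?_, fun R hR => ?_⟩
  · exact isOpen_lt (hg_cont.comp (continuous_sub_right p)) continuous_const
  · simpa [sub_eq_add_neg] using (hg_conv.convex_lt 1).translate_preimage_left (-p)
  · exact fun x hx =>
      ((hGg_pt (x - p)).eventually (gt_mem_nhds hx)).mono fun n hn => (hmem _ x).2 hn
  · intro x t ht hx
    have hGt n : G n (x - p) ≤ t⁻¹ := by
      have := (hmem n _).1 (hx n)
      rw [add_sub_cancel_left, hG_hom n t (by linarith)] at this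
      rw [← one_div, le_div_iff₀ (by linarith)]
      linarith
    exact (le_of_tendsto' (hGg_pt (x - p)) fun n => hGt (φ n)).trans_lt
      (inv_lt_one_of_one_lt₀ ht)
  · have hU : ∀ n, U (φ n) = {x | G (φ n) (x - p) < 1} := fun n => Set.ext (hmem (φ n))
    simp_rw [hU]
    exact tendsto_hausdorffDist_sublevel_inter_ball (fun n => hG_hom (φ n)) hg_hom hR
      ((tendstoLocallyUniformly_iff_forall_isCompact.1 hGg _
        (isCompact_closedBall 0 (2 * R))).mono ball_subset_closedBall)

lemma IsOpen.exists_pos_add_smul_mem {U : Set E} (hU : IsOpen U) {x : E} (hx : x ∈ U) (v : E) :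
    ∃ s : ℝ, 0 < s ∧ x + s • v ∈ U := by
  have hcont : Continuous fun s : ℝ => x + s • v := by fun_prop
  have hev : ∀ᶠ s in 𝓝[>] (0 : ℝ), x + s • v ∈ U :=
    nhdsWithin_le_nhds (hcont.continuousAt.preimage_mem_nhds (by simpa using hU.mem_nhds hx))
  exact (hev.and self_mem_nhdsWithin).exists.imp fun s hs => ⟨hs.2, hs.1⟩

lemma Convex.add_smul_mem_of_forall_add_smul_mem {Ω : Set E} (hΩo : IsOpen Ω)
    (hΩc : Convex ℝ Ω) {a b : E} (hline : ∀ t : ℝ, a + t • b ∈ Ω) {x : E} (hx : x ∈ Ω)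
    (t : ℝ) : x + t • b ∈ Ω := by
  obtain ⟨s, hs, hxs⟩ := hΩo.exists_pos_add_smul_mem hx (x - a)
  -- `x` lies strictly between `a` and `x + s (x - a)`
  have hcomb : (1 + s)⁻¹ • (x + s • (x - a)) + (s / (1 + s)) • (a + ((1 + s) / s * t) • b)
      = x + t • b := by
    match_scalars <;> field_simp
    ring
  rw [← hcomb]
  exact hΩc hxs (hline _) (by positivity) (by positivity) (by field_simp)

end

lemma ball_subset_of_forall_add_smul_single_mem {𝕜 ι : Type*} [RCLike 𝕜] [Fintype ι]
    [DecidableEq ι] {Ω : Set (EuclideanSpace 𝕜 ι)} (hΩ : Convex ℝ Ω) {p : EuclideanSpace 𝕜 ι}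
    {ρ : ℝ} (h : ∀ k (z : 𝕜), ‖z‖ < ρ → p + z • EuclideanSpace.single k 1 ∈ Ω) :
    ball p (ρ / Fintype.card ι) ⊆ Ω := by
  intro x hx
  obtain hN | hN := (Fintype.card ι).eq_zero_or_pos
  · simp [hN] at hx
  set N : ℝ := (Fintype.card ι : ℝ)
  have hN' : (0 : ℝ) < N := by positivity
  set v := x - p
  have hv : ‖v‖ < ρ / N := by rwa [mem_ball, dist_eq_norm] at hx
  have hv_sum : ∑ k, v k • EuclideanSpace.single k (1 : 𝕜) = v := by
    simpa using (EuclideanSpace.basisFun ι 𝕜).sum_repr v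
  have hterm k : (1 / N) • ((N : 𝕜) * v k) • EuclideanSpace.single k (1 : 𝕜)
      = v k • EuclideanSpace.single k 1 := by
    have : (N : 𝕜) ≠ 0 := by exact_mod_cast hN'.ne'
    rw [RCLike.real_smul_eq_coe_smul (K := 𝕜), smul_smul]
    congr 1
    push_cast
    field_simp
  have hx_sum : ∑ k, (1 / N) • (p + ((N : 𝕜) * v k) • EuclideanSpace.single k 1) = x := by
    simp only [smul_add, Finset.sum_add_distrib, hterm, hv_sum, Finset.sum_const,
      Finset.card_univ]
    rw [← Nat.cast_smul_eq_nsmul ℝ, smul_smul, mul_one_div_cancel hN'.ne', one_smul,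
      add_sub_cancel]
  rw [← hx_sum]
  refine hΩ.sum_mem (fun _ _ => by positivity) (by simp [N]; field_simp) fun k _ => h k _ ?_
  calc ‖(N : 𝕜) * v k‖ = N * ‖v k‖ := by simp [N]
    _ ≤ N * ‖v‖ := by gcongr; exact PiLp.norm_apply_le v k
    _ < N * (ρ / N) := by gcongr
    _ = ρ := by field_simp

lemma isOpen_D1set : IsOpen D1set :=
  isOpen_lt (by fun_prop) continuous_const

lemma ball_half_subset_D1set : ball (0 : ℂ) (1 / 2) ⊆ D1set := fun z hz => by
  rw [mem_ball_zero_iff] at hz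
  have := Complex.abs_re_le_norm z
  have := Complex.abs_im_le_norm z
  show |z.re| + |z.im| < 1
  linarith

lemma zero_mem_D1set : (0 : ℂ) ∈ D1set := ball_half_subset_D1set (mem_ball_self (by norm_num))

lemma noComplexLine_of_disjoint_Zset {d : ℕ} [NeZero d] {Ω : Set (EuclideanSpace ℂ (Fin d))}
    (hΩo : IsOpen Ω) (hΩc : Convex ℝ Ω)
    (hp : Complex.I • EuclideanSpace.single (0 : Fin d) (1 : ℂ) ∈ Ω)
    (hZ : ∀ m, Zset d m ∩ Ω = ∅) : NoComplexLine Ω := by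
  intro a b hb hline
  set p := Complex.I • EuclideanSpace.single (0 : Fin d) (1 : ℂ)
  have hpline (c : ℂ) : p + c • b ∈ Ω := by
    simpa using hΩc.add_smul_mem_of_forall_add_smul_mem hΩo (a := a) (b := c • b)
      (fun t => by rw [← smul_assoc, Complex.real_smul]; exact hline _) hp 1
  obtain ⟨k, hk⟩ : ∃ k, b k ≠ 0 := by
    by_contra! h0
    exact hb (by ext k; simp [h0])
  -- the line through `p` meets `Z_m` for the first index `m` with `b m ≠ 0`
  obtain ⟨m, hm : b m ≠ 0, hm_min⟩ := wellFounded_lt.has_min {k | b k ≠ 0} ⟨k, hk⟩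
  have hb_lt (k : Fin d) (hk : k < m) : b k = 0 := by
    by_contra hbk
    exact hm_min k hbk hk
  by_cases hm0 : m = 0
  · subst hm0
    refine (hZ 0).subset ⟨?_, hpline (-Complex.I / b 0)⟩
    rw [Zset, if_pos rfl]
    simp [p, div_mul_cancel₀ _ hm]
  · refine (hZ m).subset ⟨?_, hpline (b m)⁻¹⟩
    rw [Zset, if_neg hm0]
    refine ⟨?_, ?_, fun k hk0 hkm => ?_⟩
    · simp [p, hb_lt 0 (Fin.pos_iff_ne_zero.2 hm0)]
    · simp [p, hm0, inv_mul_cancel₀ hm]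
    · simp [p, hk0.ne', hb_lt k hkm]

/-- `𝕂_d` is compact: every sequence in `𝕂_d` has a subsequence converging
in the local Hausdorff topology to a domain belonging to `𝕂_d`. -/
theorem statement2 (d : ℕ) [NeZero d] (Ωn : ℕ → Set (EuclideanSpace ℂ (Fin d)))
    (h : ∀ n, Ωn n ∈ Kd d) :
    ∃ φ : ℕ → ℕ, StrictMono φ ∧ ∃ Ω ∈ Kd d, LocHausConv (fun j => Ωn (φ j)) Ω := by
  set p := Complex.I • EuclideanSpace.single (0 : Fin d) (1 : ℂ)
  have hball n : ball p (1 / 2 / d) ⊆ Ωn n := by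
    simpa using ball_subset_of_forall_add_smul_single_mem (h n).1.1.2.1
      fun k z hz => ((h n).2 k).2 z (ball_half_subset_D1set (mem_ball_zero_iff.2 hz))
  obtain ⟨φ, hφ, Ω, hΩo, hΩc, hΩ_sub, hΩ_sup, hΩ_lim⟩ :=
    exists_subseq_tendsto_hausdorffDist_of_ball_subset
      (div_pos one_half_pos (Nat.cast_pos.2 (NeZero.pos d))) (fun n => (h n).1.1.1)
      (fun n => (h n).1.1.2.1) hball
  have hsq m : ∀ w ∈ D1set, p + w • EuclideanSpace.single m (1 : ℂ) ∈ Ω := by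
    intro w hw
    obtain ⟨s, hs, hsw⟩ := isOpen_D1set.exists_pos_add_smul_mem hw w
    refine hΩ_sup _ (1 + s) (by linarith) fun n => ?_
    rw [add_sub_cancel_left, ← smul_assoc, add_smul, one_smul]
    exact ((h n).2 m).2 _ hsw
  have hpΩ : p ∈ Ω := by simpa using hsq 0 0 zero_mem_D1set
  have hZ m : Zset d m ∩ Ω = ∅ := eq_empty_of_forall_notMem fun x ⟨hxZ, hxΩ⟩ => by
    obtain ⟨n, hn⟩ := (hΩ_sub x hxΩ).exists
    exact ((h (φ n)).2 m).1.subset ⟨hxZ, hn⟩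
  refine ⟨φ, hφ, Ω, ⟨⟨⟨hΩo, hΩc, p, hpΩ⟩, noComplexLine_of_disjoint_Zset hΩo hΩc hpΩ hZ⟩,
    fun m => ⟨hZ m, hsq m⟩⟩, ‖p‖ + 1, by linarith [norm_nonneg p],
    fun R hR => hΩ_lim R (by linarith)⟩
end
end

section
/- Let Ω ⊂ ℂ × ℂ be an open convex set, let D_1 ⊂ ℂ be a non-empty open convex cone (i.e., t·D_1 = D_1 for every t > 0), and let D_2 ⊂ ℂ be a non-empty open convex set. If D_1 × {0} is contained in the closure of Ω and {0} × D_2 is contained in the closure of Ω, then D_1 × D_2 ⊂ Ω. -/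
open Set Metric Filter Topology
open scoped ENNReal NNReal

noncomputable section

/-!
For `z ∈ D₁`, `w ∈ D₂` and `0 < t < 1` the cone property puts `(z / (1 - t), 0)` in
`D₁ × {0}`, and `(z, t w) = (1 - t) (z / (1 - t), 0) + t (0, w)` lies in the closed convex
set `closure Ω`; letting `t → 1` gives `D₁ × D₂ ⊆ closure Ω`. Since `D₁ × D₂` is open, it lies
in `interior (closure Ω)`, which equals `Ω` for an open convex set.
-/

theorem Convex.prod_subset_of_cone_prod_zero_subset {E F : Type*}
    [AddCommGroup E] [Module ℝ E] [TopologicalSpace E]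
    [AddCommGroup F] [Module ℝ F] [TopologicalSpace F] [ContinuousSMul ℝ F]
    {C : Set (E × F)} (hC : Convex ℝ C) (hCc : IsClosed C) {D1 : Set E} {D2 : Set F}
    (hD1 : ∀ z ∈ D1, ∀ t : ℝ, 0 < t → t • z ∈ D1)
    (h1 : D1 ×ˢ ({0} : Set F) ⊆ C) (h2 : ({0} : Set E) ×ˢ D2 ⊆ C) :
    D1 ×ˢ D2 ⊆ C := by
  rintro ⟨z, w⟩ ⟨hz, hw⟩
  have hsegment : ∀ t ∈ Ioo (0 : ℝ) 1, (z, t • w) ∈ C := by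
    rintro t ⟨ht0, ht1⟩
    have hpos : 0 < 1 - t := sub_pos.2 ht1
    have hcombo := hC (h1 (mk_mem_prod (hD1 z hz _ (inv_pos.2 hpos)) (mem_singleton 0)))
      (h2 (mk_mem_prod (mem_singleton 0) hw))
      hpos.le ht0.le (sub_add_cancel 1 t)
    convert hcombo using 1
    ext <;> simp [smul_smul, hpos.ne']
  have hlim : Tendsto (fun t : ℝ => (z, t • w)) (𝓝[<] 1) (𝓝 (z, w)) :=
    ((continuous_const.prodMk (continuous_id.smul continuous_const)).tendsto' 1 _
      (by simp)).mono_left nhdsWithin_le_nhds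
  exact hCc.mem_of_tendsto hlim (mem_of_superset (Ioo_mem_nhdsLT zero_lt_one) hsegment)

theorem IsOpen.subset_of_subset_closure_of_convex {𝕜 E : Type*}
    [Field 𝕜] [LinearOrder 𝕜] [IsStrictOrderedRing 𝕜] [TopologicalSpace 𝕜] [OrderTopology 𝕜]
    [AddCommGroup E] [Module 𝕜 E] [TopologicalSpace E] [IsTopologicalAddGroup E]
    [ContinuousSMul 𝕜 E] {s U : Set E} (hs : IsOpen s) (hsc : Convex 𝕜 s) (hU : IsOpen U)
    (hUs : U ⊆ closure s) : U ⊆ s := by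
  rcases s.eq_empty_or_nonempty with rfl | hne
  · simpa using hUs
  · rw [← hs.interior_eq,
      ← hsc.interior_closure_eq_interior_of_nonempty_interior (by rwa [hs.interior_eq])]
    exact interior_maximal hUs hU

open scoped Pointwise in
theorem statement5_general (Ω : Set (ℂ × ℂ)) (hopen : IsOpen Ω) (hconv : Convex ℝ Ω)
    (D1 D2 : Set ℂ)
    (hD1open : IsOpen D1)
    (hD1cone : ∀ t : ℝ, 0 < t → t • D1 = D1)
    (hD2open : IsOpen D2)
    (h1 : D1 ×ˢ ({0} : Set ℂ) ⊆ closure Ω)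
    (h2 : ({0} : Set ℂ) ×ˢ D2 ⊆ closure Ω) :
    D1 ×ˢ D2 ⊆ Ω := by
  have hcone : ∀ z ∈ D1, ∀ t : ℝ, 0 < t → t • z ∈ D1 := fun z hz t ht =>
    (hD1cone t ht).subset (smul_mem_smul_set hz)
  have hclosure : D1 ×ˢ D2 ⊆ closure Ω :=
    hconv.closure.prod_subset_of_cone_prod_zero_subset isClosed_closure hcone h1 h2
  exact hopen.subset_of_subset_closure_of_convex hconv (hD1open.prod hD2open) hclosure

open scoped Pointwise in
/-- If `Ω ⊆ ℂ × ℂ` is open and convex, `D₁ ⊆ ℂ` is a non-empty open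
convex cone, `D₂ ⊆ ℂ` is non-empty open convex, and `D₁ × {0}` and `{0} × D₂` are
contained in the closure of `Ω`, then `D₁ × D₂ ⊆ Ω`. -/
theorem statement5 (Ω : Set (ℂ × ℂ)) (hopen : IsOpen Ω) (hconv : Convex ℝ Ω)
    (D1 D2 : Set ℂ)
    (hD1open : IsOpen D1) (hD1conv : Convex ℝ D1) (hD1ne : D1.Nonempty)
    (hD1cone : ∀ t : ℝ, 0 < t → t • D1 = D1)
    (hD2open : IsOpen D2) (hD2conv : Convex ℝ D2) (hD2ne : D2.Nonempty)
    (h1 : D1 ×ˢ ({0} : Set ℂ) ⊆ closure Ω)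
    (h2 : ({0} : Set ℂ) ×ˢ D2 ⊆ closure Ω) :
    D1 ×ˢ D2 ⊆ Ω :=
  statement5_general Ω hopen hconv D1 D2 hD1open hD1cone hD2open h1 h2
end
end

section
/- Suppose Ω_n is a sequence of convex domains in ℂ^d containing no complex affine line converging in the local Hausdorff topology to a convex domain Ω ∈ 𝕏_d, p_n ∈ Ω_n ∩ Ω is a sequence converging to p ∈ Ω, and v_n are unit vectors in ℂ^d converging to v. Then limsup_{n→∞} k_{Ω_n}(p_n; v_n) ≤ k_Ω(p; v). -/
open Set Metric Filter Topology
open scoped ENNReal NNReal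

noncomputable section

/-! Take a disc `f` through `plim` with `ξ • f'(0) = vlim` and `‖ξ‖` within `ε` of
`k_Ω(plim; vlim)`, and shrink it to radius `t < 1`, so that its image lies in a compact
`K ⊆ Ω`. Local Hausdorff convergence gives points of `Ω_n` near every point of a neighbourhood
of `K`, and convexity of `Ω_n` (Hahn–Banach) upgrades this to a fixed thickening of `K` lying
inside `Ω_n` for large `n`. Translating the disc by `p_n - plim` and adding the small linear term
`ζ • ξ⁻¹ • (v_n - vlim)` keeps it in that thickening, so it competes for `k_{Ω_n}(p_n; v_n)`. -/

theorem Convex.mem_of_forall_closedBall_exists_dist_lt {E : Type*} [NormedAddCommGroup E]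
    [NormedSpace ℝ E] {C : Set E} (hC : Convex ℝ C) (hCopen : IsOpen C) {y : E} {r : ℝ}
    (hr : 0 ≤ r) (hdense : ∀ y' ∈ closedBall y r, ∃ z ∈ C, dist z y' < r / 2) : y ∈ C := by
  by_contra hy
  obtain ⟨ℓ, hℓ⟩ := geometric_hahn_banach_open_point hC hCopen hy
  obtain ⟨z₀, hz₀, -⟩ := hdense y (mem_closedBall_self hr)
  have hℓ0 : 0 < ‖ℓ‖ := norm_pos_iff.2 fun h => by simpa [h] using hℓ z₀ hz₀
  obtain ⟨x, hx, hℓx⟩ := ℓ.exists_lt_apply_of_lt_opNorm (half_lt_self hℓ0)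
  -- at `y + r • u` the separating functional exceeds `ℓ y` by more than `r * ‖ℓ‖ / 2`,
  -- which keeps `C` at distance at least `r / 2` from that point
  obtain ⟨u, hu, hℓu⟩ : ∃ u : E, ‖u‖ ≤ 1 ∧ ‖ℓ‖ / 2 < ℓ u := by
    rcases lt_abs.1 hℓx with h | h
    · exact ⟨x, hx.le, h⟩
    · exact ⟨-x, by rw [norm_neg]; exact hx.le, by rwa [map_neg]⟩
  obtain ⟨z, hzC, hz⟩ := hdense (y + r • u) (by
    rw [mem_closedBall, dist_self_add_left, norm_smul, Real.norm_of_nonneg hr]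
    exact mul_le_of_le_one_right hr hu)
  have hℓz : ℓ (y + r • u) - ℓ z ≤ ‖ℓ‖ * dist z (y + r • u) := by
    rw [← map_sub, dist_comm, dist_eq_norm]
    exact (le_abs_self _).trans (ℓ.le_opNorm _)
  have := hℓ z hzC
  rw [map_add, map_smul, smul_eq_mul] at hℓz
  nlinarith [mul_lt_mul_of_pos_left hz hℓ0, mul_le_mul_of_nonneg_left hℓu.le hr]

namespace LocHausConv

variable {E : Type*} [NormedAddCommGroup E] {Ωn : ℕ → Set E} {Ω : Set E}
  {p : ℕ → E} {plim : E}

theorem eventually_forall_exists_dist_lt (hconv : LocHausConv Ωn Ω) (hp : ∀ n, p n ∈ Ωn n)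
    (hptend : Tendsto p atTop (𝓝 plim)) {S : Set E} (hS : Bornology.IsBounded S) (hSΩ : S ⊆ Ω)
    {ε : ℝ} (hε : 0 < ε) : ∀ᶠ n in atTop, ∀ y ∈ S, ∃ z ∈ Ωn n, dist z y < ε := by
  obtain ⟨R₀, -, hH⟩ := hconv
  obtain ⟨M, hM⟩ := hS.subset_ball (0 : E)
  set R := max R₀ (max M (‖plim‖ + 1))
  have hplim : plim ∈ ball (0 : E) R := by
    rw [mem_ball_zero_iff]
    exact (lt_add_one _).trans_le ((le_max_right _ _).trans (le_max_right _ _))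
  have hSR : S ⊆ ball 0 R :=
    hM.trans (ball_subset_ball ((le_max_left _ _).trans (le_max_right _ _)))
  filter_upwards [(hH R (le_max_left _ _)).eventually_lt_const hε,
    hptend.eventually (isOpen_ball.mem_nhds hplim)] with n hdist hpn y hy
  have hfin := hausdorffEDist_ne_top_of_nonempty_of_bounded (s := Ωn n ∩ ball 0 R)
    (t := Ω ∩ ball 0 R) ⟨p n, hp n, hpn⟩ ⟨y, hSΩ hy, hSR hy⟩
    (isBounded_ball.subset inter_subset_right) (isBounded_ball.subset inter_subset_right)
  obtain ⟨z, hz, hzy⟩ :=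
    exists_dist_lt_of_hausdorffDist_lt' (show y ∈ Ω ∩ ball 0 R from ⟨hSΩ hy, hSR hy⟩) hdist hfin
  exact ⟨z, hz.1, hzy⟩

theorem eventually_cthickening_subset [NormedSpace ℝ E] (hconv : LocHausConv Ωn Ω)
    (hconvex : ∀ n, Convex ℝ (Ωn n)) (hopen : ∀ n, IsOpen (Ωn n)) (hp : ∀ n, p n ∈ Ωn n)
    (hptend : Tendsto p atTop (𝓝 plim)) (hΩ : IsOpen Ω) {K : Set E} (hK : IsCompact K)
    (hKΩ : K ⊆ Ω) : ∃ δ > 0, ∀ᶠ n in atTop, cthickening δ K ⊆ Ωn n := by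
  obtain ⟨δ, hδ, hδΩ⟩ := hK.exists_cthickening_subset_open hΩ hKΩ
  refine ⟨δ / 2, half_pos hδ, ?_⟩
  filter_upwards [hconv.eventually_forall_exists_dist_lt hp hptend hK.isBounded.cthickening hδΩ
    (half_pos (half_pos hδ))] with n hn y hy
  refine (hconvex n).mem_of_forall_closedBall_exists_dist_lt (hopen n) (half_pos hδ).le
    fun y' hy' => hn y' ?_
  have := cthickening_cthickening_subset (half_pos hδ).le (half_pos hδ).le K
    (closedBall_subset_cthickening hy (δ / 2) hy')
  rwa [add_halves] at this

end LocHausConv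

section Kobayashi

variable {E : Type*} [NormedAddCommGroup E] [NormedSpace ℂ E] {Ω : Set E} {z v : E}

def kobNorms (Ω : Set E) (z v : E) : Set ℝ :=
  { c : ℝ | ∃ (ξ : ℂ) (f : ℂ → E), DifferentiableOn ℂ f (ball 0 1) ∧ MapsTo f (ball 0 1) Ω ∧
    f 0 = z ∧ ξ • deriv f 0 = v ∧ c = ‖ξ‖ }

theorem kob_eq_sInf_kobNorms : kob Ω z v = sInf (kobNorms Ω z v) := rfl

theorem kobNorms_subset_Ici : kobNorms Ω z v ⊆ Ici 0 := by
  rintro _ ⟨ξ, f, -, -, -, -, rfl⟩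
  exact norm_nonneg ξ

theorem bddBelow_kobNorms : BddBelow (kobNorms Ω z v) :=
  ⟨0, fun _ hc => kobNorms_subset_Ici hc⟩

theorem kob_nonneg : 0 ≤ kob Ω z v := by
  rw [kob_eq_sInf_kobNorms]
  exact Real.sInf_nonneg fun _ hc => kobNorms_subset_Ici hc

theorem kob_le_of_mem_kobNorms {c : ℝ} (hc : c ∈ kobNorms Ω z v) : kob Ω z v ≤ c := by
  rw [kob_eq_sInf_kobNorms]
  exact csInf_le bddBelow_kobNorms hc

theorem div_mem_kobNorms_of_mapsTo_ball {g : ℂ → E} {ρ : ℝ} (hρ : 0 < ρ)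
    (hg : DifferentiableOn ℂ g (ball 0 ρ)) (hgΩ : MapsTo g (ball 0 ρ) Ω) {ξ : ℂ}
    (hv : ξ • deriv g 0 = v) : ‖ξ‖ / ρ ∈ kobNorms Ω (g 0) v := by
  have hρ' : (ρ : ℂ) ≠ 0 := Complex.ofReal_ne_zero.2 hρ.ne'
  have hscale : MapsTo (fun ζ : ℂ => (ρ : ℂ) * ζ) (ball 0 1) (ball 0 ρ) := by
    intro ζ hζ
    rw [mem_ball_zero_iff] at hζ ⊢
    rw [norm_mul, Complex.norm_of_nonneg hρ.le]
    exact mul_lt_of_lt_one_right hρ hζ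
  have hderiv : HasDerivAt (fun ζ : ℂ => g (ρ * ζ)) ((ρ : ℂ) • deriv g 0) 0 := by
    have hg0 : HasDerivAt g (deriv g 0) ((ρ : ℂ) * 0) := by
      rw [mul_zero]
      exact (hg.differentiableAt (ball_mem_nhds 0 hρ)).hasDerivAt
    simpa [Function.comp_def] using hg0.scomp (0 : ℂ) ((hasDerivAt_id (0 : ℂ)).const_mul (ρ : ℂ))
  refine ⟨ξ / ρ, fun ζ => g (ρ * ζ), hg.comp (by fun_prop) hscale, hgΩ.comp hscale,
    by simp, ?_, ?_⟩
  · rwa [hderiv.deriv, smul_smul, div_mul_cancel₀ _ hρ']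
  · rw [norm_div, Complex.norm_of_nonneg hρ.le]

theorem kobNorms_nonempty (hΩ : IsOpen Ω) (hz : z ∈ Ω) (v : E) : (kobNorms Ω z v).Nonempty := by
  obtain ⟨ρ, hρ, hball⟩ := Metric.isOpen_iff.1
    (hΩ.preimage (by fun_prop : Continuous fun ζ : ℂ => z + ζ • v)) 0 (by simpa using hz)
  have hline : HasDerivAt (fun ζ : ℂ => z + ζ • v) v 0 := by
    simpa using ((hasDerivAt_id (0 : ℂ)).smul_const v).const_add z
  have := div_mem_kobNorms_of_mapsTo_ball (g := fun ζ : ℂ => z + ζ • v) hρ (by fun_prop)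
    (mapsTo_iff_subset_preimage.2 hball) (ξ := 1) (by rw [hline.deriv, one_smul])
  exact ⟨_, by simpa using this⟩

theorem exists_ne_zero_norm_lt_kob_add (hΩ : IsOpen Ω) (hz : z ∈ Ω) (v : E) {ε : ℝ}
    (hε : 0 < ε) : ∃ (ξ : ℂ) (f : ℂ → E), ξ ≠ 0 ∧ DifferentiableOn ℂ f (ball 0 1) ∧
      MapsTo f (ball 0 1) Ω ∧ f 0 = z ∧ ξ • deriv f 0 = v ∧ ‖ξ‖ < kob Ω z v + ε := by
  obtain ⟨_, ⟨ξ, f, hf, hfΩ, hf0, hfv, rfl⟩, hξ⟩ :=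
    (csInf_lt_iff bddBelow_kobNorms (kobNorms_nonempty hΩ hz v)).1
      (lt_add_of_pos_right (kob Ω z v) hε)
  by_cases hξ0 : ξ = 0
  · -- then `v = 0`, and the constant disc with any small nonzero `ξ` competes
    refine ⟨(ε / 2 : ℝ), fun _ => z, by exact_mod_cast (half_pos hε).ne',
      differentiableOn_const z, fun _ _ => hz, rfl, ?_, ?_⟩
    · rw [← hfv, hξ0, deriv_const, smul_zero, zero_smul]
    · rw [Complex.norm_of_nonneg (half_pos hε).le]
      linarith [kob_nonneg (Ω := Ω) (z := z) (v := v)]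
  · exact ⟨ξ, f, hξ0, hf, hfΩ, hf0, hfv, hξ⟩

theorem kob_le_of_cthickening_subset {f : ℂ → E} {t δ : ℝ} {K : Set E} (ht : 0 < t)
    (hf : DifferentiableOn ℂ f (ball 0 t)) (hfK : MapsTo f (ball 0 t) K)
    (hK : cthickening δ K ⊆ Ω) {a w : E} (haw : ‖a‖ + t * ‖w‖ ≤ δ) {ξ : ℂ}
    (hv : ξ • (deriv f 0 + w) = v) : kob Ω (f 0 + a) v ≤ ‖ξ‖ / t := by
  set g : ℂ → E := fun ζ => f ζ + (a + ζ • w)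
  have hgΩ : MapsTo g (ball 0 t) Ω := by
    intro ζ hζ
    refine hK (mem_cthickening_of_dist_le _ (f ζ) _ _ (hfK hζ) ?_)
    rw [mem_ball_zero_iff] at hζ
    calc dist (g ζ) (f ζ) = ‖a + ζ • w‖ := by rw [dist_eq_norm, add_sub_cancel_left]
      _ ≤ ‖a‖ + ‖ζ‖ * ‖w‖ := (norm_add_le _ _).trans_eq (by rw [norm_smul])
      _ ≤ δ := by nlinarith [norm_nonneg w]
  have hderiv : HasDerivAt g (deriv f 0 + w) 0 := by
    have := (hf.differentiableAt (ball_mem_nhds 0 ht)).hasDerivAt.add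
      (((hasDerivAt_id (0 : ℂ)).smul_const w).const_add a)
    rwa [one_smul] at this
  simpa [g] using kob_le_of_mem_kobNorms
    (div_mem_kobNorms_of_mapsTo_ball ht (hf.add (by fun_prop)) hgΩ (hderiv.deriv ▸ hv))

end Kobayashi

theorem LocHausConv.eventually_kob_le_add {E : Type*} [NormedAddCommGroup E] [NormedSpace ℂ E]
    {Ωn : ℕ → Set E} {Ω : Set E} (hconv : LocHausConv Ωn Ω) (hconvex : ∀ n, Convex ℝ (Ωn n))
    (hopen : ∀ n, IsOpen (Ωn n)) (hΩ : IsOpen Ω) {p : ℕ → E} {plim : E} (hp : ∀ n, p n ∈ Ωn n)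
    (hplim : plim ∈ Ω) (hptend : Tendsto p atTop (𝓝 plim)) {v : ℕ → E} {vlim : E}
    (hvtend : Tendsto v atTop (𝓝 vlim)) {ε : ℝ} (hε : 0 < ε) :
    ∀ᶠ n in atTop, kob (Ωn n) (p n) (v n) ≤ kob Ω plim vlim + ε := by
  obtain ⟨ξ, f, hξ, hf, hfΩ, hf0, hfv, hξlt⟩ := exists_ne_zero_norm_lt_kob_add hΩ hplim vlim hε
  have hkε : 0 < kob Ω plim vlim + ε := by linarith [kob_nonneg (Ω := Ω) (z := plim) (v := vlim)]
  -- shrinking the near-extremal disc to radius `t` costs exactly the slack `ε`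
  set t := ‖ξ‖ / (kob Ω plim vlim + ε)
  have ht : 0 < t := div_pos (norm_pos_iff.2 hξ) hkε
  have ht1 : closedBall (0 : ℂ) t ⊆ ball 0 1 := closedBall_subset_ball ((div_lt_one hkε).2 hξlt)
  obtain ⟨δ, hδ, hsub⟩ := hconv.eventually_cthickening_subset hconvex hopen hp hptend hΩ
    ((isCompact_closedBall 0 t).image_of_continuousOn (hf.continuousOn.mono ht1))
    (image_subset_iff.2 (hfΩ.mono_left ht1))
  have hsmall : Tendsto (fun n => ‖p n - plim‖ + t * ‖ξ⁻¹ • (v n - vlim)‖) atTop (𝓝 0) := by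
    simpa using (tendsto_iff_norm_sub_tendsto_zero.1 hptend).add
      (((tendsto_sub_nhds_zero_iff.2 hvtend).const_smul ξ⁻¹).norm.const_mul t)
  filter_upwards [hsub, hsmall.eventually (ge_mem_nhds hδ)] with n hn hsmalln
  have := kob_le_of_cthickening_subset ht (hf.mono (ball_subset_closedBall.trans ht1))
    ((mapsTo_image f _).mono_left ball_subset_closedBall) hn hsmalln
    (by rw [smul_add, hfv, smul_inv_smul₀ hξ, add_sub_cancel])
  rwa [hf0, add_sub_cancel, div_div_cancel₀ (norm_ne_zero_iff.2 hξ)] at this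

theorem limsup_ofReal_le_of_forall_eventually_le_add {ι : Type*} {l : Filter ι} {u : ι → ℝ}
    {a : ℝ} (h : ∀ ε > 0, ∀ᶠ i in l, u i ≤ a + ε) :
    limsup (fun i => ENNReal.ofReal (u i)) l ≤ ENNReal.ofReal a := by
  refine ENNReal.le_of_forall_pos_le_add fun ε hε _ => ?_
  calc limsup (fun i => ENNReal.ofReal (u i)) l
      ≤ ENNReal.ofReal (a + ε) :=
        limsup_le_of_le (by isBoundedDefault)
          ((h ε hε).mono fun _ hi => ENNReal.ofReal_le_ofReal hi)
    _ ≤ ENNReal.ofReal a + ε := ENNReal.ofReal_add_le.trans_eq (by rw [ENNReal.ofReal_coe_nnreal])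

theorem statement8_general (d : ℕ) (Ωn : ℕ → Set (EuclideanSpace ℂ (Fin d)))
    (hΩn : ∀ n, InX (Ωn n))
    (Ω : Set (EuclideanSpace ℂ (Fin d))) (hΩ : InX Ω)
    (hconv : LocHausConv Ωn Ω)
    (p : ℕ → EuclideanSpace ℂ (Fin d)) (plim : EuclideanSpace ℂ (Fin d))
    (hp : ∀ n, p n ∈ Ωn n ∩ Ω) (hplim : plim ∈ Ω) (hptend : Tendsto p atTop (nhds plim))
    (v : ℕ → EuclideanSpace ℂ (Fin d)) (vlim : EuclideanSpace ℂ (Fin d))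
    (hvtend : Tendsto v atTop (nhds vlim)) :
    Filter.limsup (fun n => ENNReal.ofReal (kob (Ωn n) (p n) (v n))) atTop ≤
      ENNReal.ofReal (kob Ω plim vlim) :=
  limsup_ofReal_le_of_forall_eventually_le_add fun _ hε =>
    hconv.eventually_kob_le_add (fun n => (hΩn n).1.2.1) (fun n => (hΩn n).1.1) hΩ.1.1
      (fun n => (hp n).1) hplim hptend hvtend hε

/-- upper semicontinuity of the Kobayashi metric under local Hausdorff
convergence: `limsup k_{Ω_n}(p_n; v_n) ≤ k_Ω(p; v)` (limsup taken in `ℝ≥0∞`). -/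
theorem statement8 (d : ℕ) (Ωn : ℕ → Set (EuclideanSpace ℂ (Fin d)))
    (hΩn : ∀ n, InX (Ωn n))
    (Ω : Set (EuclideanSpace ℂ (Fin d))) (hΩ : InX Ω)
    (hconv : LocHausConv Ωn Ω)
    (p : ℕ → EuclideanSpace ℂ (Fin d)) (plim : EuclideanSpace ℂ (Fin d))
    (hp : ∀ n, p n ∈ Ωn n ∩ Ω) (hplim : plim ∈ Ω) (hptend : Tendsto p atTop (nhds plim))
    (v : ℕ → EuclideanSpace ℂ (Fin d)) (vlim : EuclideanSpace ℂ (Fin d))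
    (hv : ∀ n, ‖v n‖ = 1) (hvtend : Tendsto v atTop (nhds vlim)) :
    Filter.limsup (fun n => ENNReal.ofReal (kob (Ωn n) (p n) (v n))) atTop ≤
      ENNReal.ofReal (kob Ω plim vlim) :=
  statement8_general d Ωn hΩn Ω hΩ hconv p plim hp hplim hptend v vlim hvtend
end
end

section
/- Let Ω ⊂ ℂ^d be a convex domain containing no complex affine line. Then the infinitesimal Kobayashi metric of Ω is non-degenerate: k_Ω(z; v) > 0 for every z ∈ Ω and every non-zero vector v ∈ ℂ^d. -/
open Set Metric Filter Topology
open scoped ENNReal NNReal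

noncomputable section

/-!
Some point `z + λ • v` lies outside `Ω`, since `Ω` contains no complex line. Hahn–Banach separates
it from the open convex set `Ω` by a complex functional `L` with `re (L x) < t` on `Ω`, and then
`L v ≠ 0`. For a holomorphic disk `f` through `z`, `L ∘ f` takes values in the half-plane
`re < t`, so a Schwarz-type estimate bounds `‖L (f' 0)‖` by a constant `C` independent of `f`.
Hence `ξ • f' 0 = v` forces `‖ξ‖ ≥ ‖L v‖ / C > 0`.
-/

variable {E : Type*} [NormedAddCommGroup E] [NormedSpace ℂ E]

/-- `exp (g - t)` maps the disk into the unit disk, so the Schwarz lemma applies to it. -/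
theorem Complex.norm_deriv_le_of_re_lt {g : ℂ → ℂ} {c : ℂ} {R t : ℝ} (hR : 0 < R)
    (hg : DifferentiableOn ℂ g (ball c R)) (hlt : ∀ w ∈ ball c R, (g w).re < t) :
    ‖deriv g c‖ ≤ 2 * Real.exp (t - (g c).re) / R := by
  set h : ℂ → ℂ := fun w => Complex.exp (g w - t)
  have hc : c ∈ ball c R := mem_ball_self hR
  have h_lt_one : ∀ w ∈ ball c R, ‖h w‖ < 1 := fun w hw => by
    simpa [h, Complex.norm_exp] using hlt w hw
  have h_maps : MapsTo h (ball c R) (closedBall (h c) 2) := fun w hw => by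
    rw [mem_closedBall, dist_eq_norm]
    linarith [norm_sub_le (h w) (h c), h_lt_one w hw, h_lt_one c hc]
  have h_deriv : deriv h c = Complex.exp (g c - t) * deriv g c :=
    (((hg.differentiableAt (isOpen_ball.mem_nhds hc)).hasDerivAt).sub_const _).cexp.deriv
  have hschwarz := Complex.norm_deriv_le_div_of_mapsTo_ball
    ((hg.sub_const _).cexp) h_maps hR
  rw [h_deriv, norm_mul, Complex.norm_exp] at hschwarz
  simp only [Complex.sub_re, Complex.ofReal_re] at hschwarz
  have hexp : Real.exp ((g c).re - t) * Real.exp (t - (g c).re) = 1 := by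
    rw [← Real.exp_add]; simp
  calc ‖deriv g c‖
      = Real.exp ((g c).re - t) * ‖deriv g c‖ * Real.exp (t - (g c).re) := by
        rw [mul_right_comm, hexp, one_mul]
    _ ≤ 2 / R * Real.exp (t - (g c).re) := by gcongr
    _ = 2 * Real.exp (t - (g c).re) / R := by ring

theorem norm_apply_deriv_le_of_mapsTo_ball {Ω : Set E} {L : StrongDual ℂ E} {t : ℝ}
    (hL : ∀ x ∈ Ω, (L x).re < t) {f : ℂ → E} (hf : DifferentiableOn ℂ f (ball 0 1))
    (hmaps : MapsTo f (ball 0 1) Ω) :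
    ‖L (deriv f 0)‖ ≤ 2 * Real.exp (t - (L (f 0)).re) := by
  have hderiv : deriv (L ∘ f) 0 = L (deriv f 0) :=
    (L.hasFDerivAt.comp_hasDerivAt 0
      (hf.differentiableAt (ball_mem_nhds 0 one_pos)).hasDerivAt).deriv
  simpa [hderiv] using Complex.norm_deriv_le_of_re_lt one_pos
    (L.differentiable.comp_differentiableOn hf) fun w hw => hL _ (hmaps hw)

theorem exists_mapsTo_ball_add_smul {Ω : Set E} {z : E} (hΩ : IsOpen Ω) (hz : z ∈ Ω) (v : E) :
    ∃ r : ℂ, r ≠ 0 ∧ MapsTo (fun w : ℂ => z + (r * w) • v) (ball 0 1) Ω := by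
  obtain ⟨ε, hε, hball⟩ := Metric.isOpen_iff.1 hΩ z hz
  set r : ℝ := ε / (‖v‖ + 1)
  have hr : 0 < r := by positivity
  refine ⟨r, by exact_mod_cast hr.ne', fun w hw => hball ?_⟩
  rw [mem_ball_zero_iff] at hw
  rw [mem_ball, dist_self_add_left, norm_smul, norm_mul, Complex.norm_real,
    Real.norm_of_nonneg hr.le]
  calc r * ‖w‖ * ‖v‖ ≤ r * ‖w‖ * (‖v‖ + 1) := by gcongr; linarith
    _ < r * 1 * (‖v‖ + 1) := by gcongr
    _ = ε := by simp only [mul_one, r]; field_simp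

theorem le_kob {Ω : Set E} {z v : E} {c : ℝ} (hΩ : IsOpen Ω) (hz : z ∈ Ω)
    (h : ∀ (ξ : ℂ) (f : ℂ → E), DifferentiableOn ℂ f (ball 0 1) → MapsTo f (ball 0 1) Ω →
      f 0 = z → ξ • deriv f 0 = v → c ≤ ‖ξ‖) :
    c ≤ kob Ω z v := by
  obtain ⟨r, hr, hmaps⟩ := exists_mapsTo_ball_add_smul hΩ hz v
  have hderiv : HasDerivAt (fun w : ℂ => z + (r * w) • v) (r • v) 0 := by
    simpa using (((hasDerivAt_id (0 : ℂ)).const_mul r).smul_const v).const_add z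
  refine le_csInf ⟨_, r⁻¹, _, ?_, hmaps, by simp, ?_, rfl⟩ ?_
  · fun_prop
  · rw [hderiv.deriv, smul_smul, inv_mul_cancel₀ hr, one_smul]
  · rintro _ ⟨ξ, f, hf, hmaps, hf0, hξ, rfl⟩
    exact h ξ f hf hmaps hf0 hξ

theorem kob_pos_of_inX {Ω : Set E} (hΩ : InX Ω) {z : E} (hz : z ∈ Ω) {v : E} (hv : v ≠ 0) :
    0 < kob Ω z v := by
  obtain ⟨⟨hopen, hconv, -⟩, hline⟩ := hΩ
  obtain ⟨lam, hp⟩ : ∃ lam : ℂ, z + lam • v ∉ Ω := not_forall.1 (hline z v hv)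
  obtain ⟨L, hL⟩ := RCLike.geometric_hahn_banach_open_point (𝕜 := ℂ) hconv hopen hp
  have hLv : L v ≠ 0 := fun h0 => by simpa [h0] using hL z hz
  set C := 2 * Real.exp ((L (z + lam • v)).re - (L z).re)
  refine (div_pos (norm_pos_iff.2 hLv) (by positivity : 0 < C)).trans_le
    (le_kob hopen hz fun ξ f hf hmaps hf0 hξ => ?_)
  have hbound := hf0 ▸ norm_apply_deriv_le_of_mapsTo_ball hL hf hmaps
  rw [div_le_iff₀ (by positivity), ← hξ, map_smul, smul_eq_mul, norm_mul]
  exact mul_le_mul_of_nonneg_left hbound (norm_nonneg ξ)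

/-- The infinitesimal Kobayashi metric of a convex domain containing
no complex affine line is non-degenerate. -/
theorem statement12 (d : ℕ) (Ω : Set (EuclideanSpace ℂ (Fin d))) (hΩ : InX Ω)
    (z : EuclideanSpace ℂ (Fin d)) (hz : z ∈ Ω)
    (v : EuclideanSpace ℂ (Fin d)) (hv : v ≠ 0) :
    0 < kob Ω z v :=
  kob_pos_of_inX hΩ hz hv
end
end
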